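/- arXiv:2302.00237 — 2 statements merged into one kernel-verified Lean document; each statement's English description precedes it below -/
import Mathlib

section
/- Let γ ∈ (0,1), let U ⊆ ℝᵐ, let f : ℝⁿ × ℝᵐ → ℝⁿ, let R : ℝⁿ × ℝᵐ → ℝ, and let V : ℝⁿ → ℝ be a bounded, continuously differentiable function satisfying the Hamilton–Jacobi–Bellman inequality V(x) · ln γ + R(x,u) + ⟪∇V(x), f(x,u)⟫ ≤ 0 for all x ∈ ℝⁿ and all u ∈ U. Let u : [0,∞) → ℝᵐ with u(t) ∈ U for all t ≥ 0, and let x : [0,∞) → ℝⁿ be differentiable with x'(t) = f(x(t), u(t)) for all t ≥ 0 and x(0) = x₀. Assume the function t ↦ γ^t · R(x(t), u(t)) is integrable on [0,∞). Then ∫₀^∞ γ^τ · R(x(τ), u(τ)) dτ ≤ V(x₀). -/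
/-!
Along an admissible trajectory, the HJB inequality says exactly that the discounted value
`t ↦ γ^t V(x t)` decreases at least as fast as the discounted reward is collected,
`d/dt (γ^t V(x t)) = γ^t (V ln γ + ⟪∇V, f⟫) ≤ -γ^t R`. Integrating over `[0, T]` bounds the reward
collected up to time `T` by `V x₀ - γ^T V(x T)`, and since `V` is bounded and `γ < 1` the
correction term vanishes as `T → ∞`.
-/

open MeasureTheory RealInnerProductSpace Filter Topology Set

theorem setIntegral_Ici_le_of_tendsto_of_forall_intervalIntegral_le {φ b : ℝ → ℝ} {a L : ℝ}
    (hφ : IntegrableOn φ (Ici a)) (hb : Tendsto b atTop (𝓝 L))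
    (hle : ∀ T ≥ a, ∫ τ in a..T, φ τ ≤ b T) :
    ∫ τ in Ici a, φ τ ≤ L := by
  rw [integral_Ici_eq_integral_Ioi]
  refine le_of_tendsto_of_tendsto
    (intervalIntegral_tendsto_integral_Ioi a (hφ.mono_set Ioi_subset_Ici_self) tendsto_id) hb ?_
  filter_upwards [eventually_ge_atTop a] using hle

section DiscountedValue

variable {E F : Type*} [NormedAddCommGroup E] [InnerProductSpace ℝ E] [CompleteSpace E]
  {γ : ℝ} {V : E → ℝ} {x : ℝ → E}

theorem hasDerivAt_rpow_mul_comp (hγ : 0 < γ) {v : E} {t : ℝ}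
    (hV : DifferentiableAt ℝ V (x t)) (hx : HasDerivAt x v t) :
    HasDerivAt (fun s => γ ^ s * V (x s))
      (γ ^ t * (V (x t) * Real.log γ + ⟪gradient V (x t), v⟫)) t := by
  have hVx :
      HasDerivAt (fun s => V (x s)) (InnerProductSpace.toDual ℝ E (gradient V (x t)) v) t :=
    hV.hasGradientAt.hasFDerivAt.comp_hasDerivAt t hx
  rw [InnerProductSpace.toDual_apply_apply] at hVx
  exact ((Real.hasStrictDerivAt_const_rpow hγ t).hasDerivAt.mul hVx).congr_deriv (by ring)

theorem intervalIntegral_discounted_reward_le_of_hjb {U : Set F} {f : E → F → E}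
    {R : E → F → ℝ} {u : ℝ → F} {T : ℝ} (hγ : 0 < γ) (hT : 0 ≤ T)
    (hV : Differentiable ℝ V)
    (hHJB : ∀ y, ∀ w ∈ U, V y * Real.log γ + R y w + ⟪gradient V y, f y w⟫ ≤ 0)
    (hu : ∀ t ∈ Icc 0 T, u t ∈ U)
    (hx : ∀ t ∈ Icc 0 T, HasDerivAt x (f (x t) (u t)) t)
    (hint : IntegrableOn (fun t => γ ^ t * R (x t) (u t)) (Icc 0 T)) :
    ∫ τ in 0..T, γ ^ τ * R (x τ) (u τ) ≤ V (x 0) - γ ^ T * V (x T) := by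
  have hderiv : ∀ t ∈ Icc 0 T, HasDerivAt (fun s => -(γ ^ s * V (x s)))
      (-(γ ^ t * (V (x t) * Real.log γ + ⟪gradient V (x t), f (x t) (u t)⟫))) t :=
    fun t ht => (hasDerivAt_rpow_mul_comp hγ (hV _) (hx t ht)).neg
  have hreward_le : ∀ t ∈ Ioo 0 T, γ ^ t * R (x t) (u t) ≤
      -(γ ^ t * (V (x t) * Real.log γ + ⟪gradient V (x t), f (x t) (u t)⟫)) := by
    intro t ht
    have hHJBt := hHJB (x t) (u t) (hu t (Ioo_subset_Icc_self ht))
    nlinarith [Real.rpow_pos_of_pos hγ t]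
  have hftc := intervalIntegral.integral_le_sub_of_hasDeriv_right_of_le hT
    (fun t ht => (hderiv t ht).continuousAt.continuousWithinAt)
    (fun t ht => (hderiv t (Ioo_subset_Icc_self ht)).hasDerivWithinAt) hint hreward_le
  simpa [sub_eq_neg_add, add_comm] using hftc

end DiscountedValue

/-- If a bounded `C¹` function `V` satisfies the HJB inequality
`V(x)·ln γ + R(x,u) + ⟪∇V(x), f(x,u)⟫ ≤ 0` for all states `x` and controls `u ∈ U`,
then the discounted total reward of any admissible trajectory from `x₀` is at most `V(x₀)`. -/
theorem discounted_reward_le_of_hjb_inequality {n m : ℕ} (γ : ℝ)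
    (hγ : γ ∈ Set.Ioo (0 : ℝ) 1)
    (U : Set (EuclideanSpace ℝ (Fin m)))
    (f : EuclideanSpace ℝ (Fin n) → EuclideanSpace ℝ (Fin m) → EuclideanSpace ℝ (Fin n))
    (R : EuclideanSpace ℝ (Fin n) → EuclideanSpace ℝ (Fin m) → ℝ)
    (V : EuclideanSpace ℝ (Fin n) → ℝ)
    (hVbound : ∃ C : ℝ, ∀ y, |V y| ≤ C)
    (hV : ContDiff ℝ 1 V)
    (hHJB : ∀ y : EuclideanSpace ℝ (Fin n), ∀ w ∈ U,
      V y * Real.log γ + R y w + ⟪gradient V y, f y w⟫ ≤ 0)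
    (x₀ : EuclideanSpace ℝ (Fin n))
    (u : ℝ → EuclideanSpace ℝ (Fin m)) (x : ℝ → EuclideanSpace ℝ (Fin n))
    (hu : ∀ t ≥ (0 : ℝ), u t ∈ U)
    (hx : ∀ t ≥ (0 : ℝ), HasDerivAt x (f (x t) (u t)) t)
    (hx0 : x 0 = x₀)
    (hint : IntegrableOn (fun t : ℝ => γ ^ t * R (x t) (u t)) (Set.Ici 0)) :
    (∫ τ in Set.Ici (0 : ℝ), γ ^ τ * R (x τ) (u τ)) ≤ V x₀ := by
  obtain ⟨C, hC⟩ := hVbound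
  have hfinite : ∀ T ≥ 0, ∫ τ in 0..T, γ ^ τ * R (x τ) (u τ) ≤ V x₀ + C * γ ^ T := by
    intro T hT
    have hreward := intervalIntegral_discounted_reward_le_of_hjb hγ.1 hT
      (hV.differentiable one_ne_zero) hHJB (fun t ht => hu t ht.1) (fun t ht => hx t ht.1)
      (hint.mono_set Icc_subset_Ici_self)
    have hbound : -(γ ^ T * V (x T)) ≤ C * γ ^ T := by
      nlinarith [neg_le_of_abs_le (hC (x T)), Real.rpow_pos_of_pos hγ.1 T]
    rw [hx0] at hreward
    linarith
  have hdecay : Tendsto (fun T : ℝ => V x₀ + C * γ ^ T) atTop (𝓝 (V x₀ + C * 0)) :=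
    ((tendsto_rpow_atTop_of_base_lt_one γ (by linarith [hγ.1]) hγ.2).const_mul C).const_add _
  simpa using setIntegral_Ici_le_of_tendsto_of_forall_intervalIntegral_le hint hdecay hfinite
end

section
/- Let γ ∈ (0,1), let U ⊆ ℝᵐ, let f : ℝⁿ × ℝᵐ → ℝⁿ, let R : ℝⁿ × ℝᵐ → ℝ, and let V : ℝⁿ → ℝ be a bounded, continuously differentiable function. Suppose u* : [0,∞) → ℝᵐ with u*(t) ∈ U for all t ≥ 0, and x* : [0,∞) → ℝⁿ is differentiable with x*'(t) = f(x*(t), u*(t)) for all t ≥ 0 and x*(0) = x₀, the function t ↦ γ^t · R(x*(t), u*(t)) is integrable on [0,∞), and the HJB equality V(x*(t)) · ln γ + R(x*(t), u*(t)) + ⟪∇V(x*(t)), f(x*(t), u*(t))⟫ = 0 holds along the trajectory for all t ≥ 0. Then ∫₀^∞ γ^τ · R(x*(τ), u*(τ)) dτ = V(x₀). -/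
open MeasureTheory RealInnerProductSpace

open Set Filter Topology

/-!
Along the trajectory, the HJB equality says exactly that `t ↦ -γ^t V(x*(t))` is an antiderivative
of the discounted reward `t ↦ γ^t R(x*(t), u*(t))`. Since `V` is bounded and `γ < 1`, this
antiderivative tends to `0` at infinity, so the improper integral over `[0, ∞)` equals its value
`0 - (-V(x₀))` by the fundamental theorem of calculus.
-/

theorem HasGradientAt.comp_hasDerivAt {F : Type*} [NormedAddCommGroup F] [InnerProductSpace ℝ F]
    [CompleteSpace F] {V : F → ℝ} {g : F} {x : ℝ → F} {v : F} {t : ℝ}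
    (hV : HasGradientAt V g (x t)) (hx : HasDerivAt x v t) :
    HasDerivAt (fun s => V (x s)) ⟪g, v⟫ t := by
  have h := hV.hasFDerivAt.comp_hasDerivAt t hx
  simp only [InnerProductSpace.toDual_apply_apply] at h
  exact h

theorem tendsto_rpow_mul_atTop_nhds_zero_of_bounded {γ : ℝ} (hγ : γ ∈ Ioo (0 : ℝ) 1)
    {φ : ℝ → ℝ} (hφ : ∃ C, ∀ t, |φ t| ≤ C) :
    Tendsto (fun t => γ ^ t * φ t) atTop (𝓝 0) := by
  obtain ⟨C, hC⟩ := hφ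
  exact (tendsto_rpow_atTop_of_base_lt_one γ (by linarith [hγ.1]) hγ.2).zero_mul_isBoundedUnder_le
    ⟨C, eventually_map.2 (Eventually.of_forall hC)⟩

theorem integral_rpow_mul_eq_of_hjb {γ : ℝ} (hγ : γ ∈ Ioo (0 : ℝ) 1) {φ φ' r : ℝ → ℝ}
    (hφ : ∃ C, ∀ t, |φ t| ≤ C) (hderiv : ∀ t ≥ (0 : ℝ), HasDerivAt φ (φ' t) t)
    (hint : IntegrableOn (fun t => γ ^ t * r t) (Ici 0))
    (hhjb : ∀ t ≥ (0 : ℝ), φ t * Real.log γ + r t + φ' t = 0) :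
    ∫ t in Ici (0 : ℝ), γ ^ t * r t = φ 0 := by
  have hantideriv : ∀ t ≥ (0 : ℝ), HasDerivAt (fun s => -(γ ^ s * φ s)) (γ ^ t * r t) t := by
    intro t ht
    have hdiscount := (Real.hasStrictDerivAt_const_rpow hγ.1 t).hasDerivAt
    refine ((hdiscount.mul (hderiv t ht)).neg).congr_deriv ?_
    linear_combination (-(γ ^ t)) * hhjb t ht
  have hlim : Tendsto (fun s => -(γ ^ s * φ s)) atTop (𝓝 0) := by
    simpa using (tendsto_rpow_mul_atTop_nhds_zero_of_bounded hγ hφ).neg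
  rw [integral_Ici_eq_integral_Ioi,
    integral_Ioi_of_hasDerivAt_of_tendsto (hantideriv 0 le_rfl).continuousAt.continuousWithinAt
      (fun t ht => hantideriv t (le_of_lt ht)) (hint.mono_set Ioi_subset_Ici_self) hlim]
  simp

theorem discounted_reward_eq_of_hjb_equality_general {n m : ℕ} (γ : ℝ)
    (hγ : γ ∈ Set.Ioo (0 : ℝ) 1)
    (f : EuclideanSpace ℝ (Fin n) → EuclideanSpace ℝ (Fin m) → EuclideanSpace ℝ (Fin n))
    (R : EuclideanSpace ℝ (Fin n) → EuclideanSpace ℝ (Fin m) → ℝ)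
    (V : EuclideanSpace ℝ (Fin n) → ℝ)
    (hVbound : ∃ C : ℝ, ∀ y, |V y| ≤ C)
    (hV : ContDiff ℝ 1 V)
    (x₀ : EuclideanSpace ℝ (Fin n))
    (ustar : ℝ → EuclideanSpace ℝ (Fin m)) (xstar : ℝ → EuclideanSpace ℝ (Fin n))
    (hx : ∀ t ≥ (0 : ℝ), HasDerivAt xstar (f (xstar t) (ustar t)) t)
    (hx0 : xstar 0 = x₀)
    (hint : IntegrableOn (fun t : ℝ => γ ^ t * R (xstar t) (ustar t)) (Set.Ici 0))
    (hHJBeq : ∀ t ≥ (0 : ℝ),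
      V (xstar t) * Real.log γ + R (xstar t) (ustar t) +
        ⟪gradient V (xstar t), f (xstar t) (ustar t)⟫ = 0) :
    (∫ τ in Set.Ici (0 : ℝ), γ ^ τ * R (xstar τ) (ustar τ)) = V x₀ := by
  have hderiv : ∀ t ≥ (0 : ℝ), HasDerivAt (fun s => V (xstar s))
      ⟪gradient V (xstar t), f (xstar t) (ustar t)⟫ t := fun t ht =>
    ((hV.differentiable one_ne_zero).differentiableAt.hasGradientAt).comp_hasDerivAt (hx t ht)
  rw [← hx0]
  exact integral_rpow_mul_eq_of_hjb hγ (hVbound.imp fun C hC t => hC (xstar t)) hderiv hint hHJBeq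

/-- If a bounded `C¹` function `V` satisfies the HJB equality
`V(x*(t))·ln γ + R(x*(t),u*(t)) + ⟪∇V(x*(t)), f(x*(t),u*(t))⟫ = 0` along an admissible
trajectory `x*` with control `u*` from `x₀`, then the discounted total reward of that
trajectory equals `V(x₀)`. -/
theorem discounted_reward_eq_of_hjb_equality {n m : ℕ} (γ : ℝ)
    (hγ : γ ∈ Set.Ioo (0 : ℝ) 1)
    (U : Set (EuclideanSpace ℝ (Fin m)))
    (f : EuclideanSpace ℝ (Fin n) → EuclideanSpace ℝ (Fin m) → EuclideanSpace ℝ (Fin n))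
    (R : EuclideanSpace ℝ (Fin n) → EuclideanSpace ℝ (Fin m) → ℝ)
    (V : EuclideanSpace ℝ (Fin n) → ℝ)
    (hVbound : ∃ C : ℝ, ∀ y, |V y| ≤ C)
    (hV : ContDiff ℝ 1 V)
    (x₀ : EuclideanSpace ℝ (Fin n))
    (ustar : ℝ → EuclideanSpace ℝ (Fin m)) (xstar : ℝ → EuclideanSpace ℝ (Fin n))
    (hu : ∀ t ≥ (0 : ℝ), ustar t ∈ U)
    (hx : ∀ t ≥ (0 : ℝ), HasDerivAt xstar (f (xstar t) (ustar t)) t)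
    (hx0 : xstar 0 = x₀)
    (hint : IntegrableOn (fun t : ℝ => γ ^ t * R (xstar t) (ustar t)) (Set.Ici 0))
    (hHJBeq : ∀ t ≥ (0 : ℝ),
      V (xstar t) * Real.log γ + R (xstar t) (ustar t) +
        ⟪gradient V (xstar t), f (xstar t) (ustar t)⟫ = 0) :
    (∫ τ in Set.Ici (0 : ℝ), γ ^ τ * R (xstar τ) (ustar τ)) = V x₀ :=
  discounted_reward_eq_of_hjb_equality_general γ hγ f R V hVbound hV x₀ ustar xstar hx hx0 hint
    hHJBeq
end
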